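/- Let G₁ and G₂ be kernels on R^n_+, each having the reflection properties (P1)–(P3) for every λ > 0, and define the composed kernel G(x, y) = ∫_{R^n_+} G₁(x, z) G₂(z, y) dz, assumed finite for all x ≠ y in R^n_+. Then G has property (P3): for every λ > 0, every x ∈ Σ_λ, and every y ∈ R^n_+ with y_n ≥ λ and y ≠ x^λ, one has G(x^λ, y) > G(x, y) and G(y, x^λ) > G(y, x). -/

import Mathlib

open MeasureTheory Filter Set Metric
open scoped ENNReal

noncomputable section

variable {n : ℕ}

/-- Reflection of `x` about the hyperplane `x i = lam`. -/
def reflect (i : Fin n) (lam : ℝ) (x : EuclideanSpace ℝ (Fin n)) :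
    EuclideanSpace ℝ (Fin n) :=
  WithLp.toLp 2 (Function.update x i (2 * lam - x i))

/-- The half space `R^n_+ = {x : x i > 0}` (with `i` the last coordinate). -/
def halfSpace (i : Fin n) : Set (EuclideanSpace ℝ (Fin n)) := {x | 0 < x i}

/-- `Σ_λ = {x ∈ R^n_+ : 0 < x i < λ}`. -/
def sigmaSlab (i : Fin n) (lam : ℝ) : Set (EuclideanSpace ℝ (Fin n)) :=
  {x | 0 < x i ∧ x i < lam}

/-- Property (P1) of a kernel. -/
def PropP1 (i : Fin n) (K : EuclideanSpace ℝ (Fin n) → EuclideanSpace ℝ (Fin n) → ℝ) : Prop :=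
  ∀ lam > (0 : ℝ), ∀ x ∈ sigmaSlab i lam, ∀ y ∈ sigmaSlab i lam, x ≠ y →
    max (K (reflect i lam x) y) (K x (reflect i lam y)) <
      K (reflect i lam x) (reflect i lam y)

/-- Property (P2) of a kernel. -/
def PropP2 (i : Fin n) (K : EuclideanSpace ℝ (Fin n) → EuclideanSpace ℝ (Fin n) → ℝ) : Prop :=
  ∀ lam > (0 : ℝ), ∀ x ∈ sigmaSlab i lam, ∀ y ∈ sigmaSlab i lam, x ≠ y →
    |K (reflect i lam x) y - K x (reflect i lam y)| <
      K (reflect i lam x) (reflect i lam y) - K x y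

/-- Property (P3) of a kernel. -/
def PropP3 (i : Fin n) (K : EuclideanSpace ℝ (Fin n) → EuclideanSpace ℝ (Fin n) → ℝ) : Prop :=
  ∀ lam > (0 : ℝ), ∀ x ∈ sigmaSlab i lam, ∀ y : EuclideanSpace ℝ (Fin n),
    0 < y i → lam ≤ y i → y ≠ reflect i lam x →
      K x y < K (reflect i lam x) y ∧ K y x < K y (reflect i lam x)

/-- A kernel has the reflection properties (P1)-(P3). -/
def HasReflProps (i : Fin n) (K : EuclideanSpace ℝ (Fin n) → EuclideanSpace ℝ (Fin n) → ℝ) :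
    Prop :=
  PropP1 i K ∧ PropP2 i K ∧ PropP3 i K


/-! The difference `G(x^λ, y) - G(x, y)` is the integral over `R^n_+` of
`φ(z) = (G₁(x^λ, z) - G₁(x, z)) G₂(z, y)`. Above `T_λ` the integrand is nonnegative by (P3) for
`G₁`; the integral over the mirror image of `Σ_λ` is moved onto `Σ_λ` by the reflection, and there
`φ(z) + φ(z^λ) > 0` by (P1), (P2) for `G₁` and (P3) for `G₂`. The inequality
`G(y, x) < G(y, x^λ)` is the same statement for the transposed kernels `G₂ᵀ`, `G₁ᵀ`, which again
have the reflection properties. -/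

lemma reflect_apply_self (i : Fin n) (lam : ℝ) (x : EuclideanSpace ℝ (Fin n)) :
    reflect i lam x i = 2 * lam - x i := by
  simp [reflect]

lemma reflect_involutive (i : Fin n) (lam : ℝ) : Function.Involutive (reflect i lam) := by
  intro x
  ext j
  by_cases h : j = i <;> simp [reflect, h]

lemma measurePreserving_reflect (i : Fin n) (lam : ℝ) :
    MeasurePreserving (reflect i lam) volume volume := by
  have hcoord : ∀ j, MeasurePreserving (if j = i then (2 * lam - ·) else id) volume volume := by
    intro j
    split_ifs
    · exact Measure.measurePreserving_sub_left volume (2 * lam)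
    · exact .id volume
  have e := EuclideanSpace.volume_preserving_symm_measurableEquiv_toLp (Fin n)
  have hfun : reflect i lam = MeasurableEquiv.toLp 2 (Fin n → ℝ) ∘
      (fun a j => (if j = i then (2 * lam - ·) else id) (a j)) ∘
      (MeasurableEquiv.toLp 2 (Fin n → ℝ)).symm := by
    funext x
    ext j
    by_cases h : j = i
    · subst h
      simp [reflect, MeasurableEquiv.coe_toLp_symm, MeasurableEquiv.coe_toLp]
    · simp [reflect, h, MeasurableEquiv.coe_toLp_symm, MeasurableEquiv.coe_toLp]
  rw [hfun]
  exact e.symm.comp ((volume_preserving_pi hcoord).comp e)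

lemma measurableEmbedding_reflect (i : Fin n) (lam : ℝ) : MeasurableEmbedding (reflect i lam) :=
  (MeasurableEquiv.ofInvolutive _ (reflect_involutive i lam)
    (measurePreserving_reflect i lam).measurable).measurableEmbedding

lemma reflect_mem_halfSpace {i : Fin n} {lam : ℝ} {x : EuclideanSpace ℝ (Fin n)}
    (hx : x ∈ sigmaSlab i lam) : reflect i lam x ∈ halfSpace i := by
  obtain ⟨hx0, hxlam⟩ := hx
  simp only [halfSpace, mem_ofPred_eq, reflect_apply_self]
  linarith

lemma isOpen_sigmaSlab (i : Fin n) (lam : ℝ) : IsOpen (sigmaSlab i lam) :=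
  isOpen_Ioo.preimage (EuclideanSpace.proj (𝕜 := ℝ) i).continuous

lemma measurableSet_le_coord (i : Fin n) (lam : ℝ) :
    MeasurableSet {z : EuclideanSpace ℝ (Fin n) | lam ≤ z i} :=
  isClosed_Ici.preimage (EuclideanSpace.proj (𝕜 := ℝ) i).continuous |>.measurableSet

lemma halfSpace_eq_sigmaSlab_union {i : Fin n} {lam : ℝ} (hlam : 0 < lam) :
    halfSpace i = sigmaSlab i lam ∪ {z | lam ≤ z i} := by
  ext z
  simp only [halfSpace, sigmaSlab, mem_union, mem_ofPred_eq]
  constructor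
  · intro hz
    exact (lt_or_ge (z i) lam).imp (⟨hz, ·⟩) id
  · rintro (hz | hz)
    exacts [hz.1, hlam.trans_le hz]

lemma disjoint_sigmaSlab_le_coord (i : Fin n) (lam : ℝ) :
    Disjoint (sigmaSlab i lam) {z | lam ≤ z i} :=
  disjoint_left.2 fun _ hz hz' => (not_le.2 hz.2) hz'

lemma preimage_reflect_sigmaSlab_subset (i : Fin n) (lam : ℝ) :
    reflect i lam ⁻¹' sigmaSlab i lam ⊆ {z | lam ≤ z i} := by
  intro z hz
  have := hz.2
  simp only [mem_ofPred_eq, reflect_apply_self] at this ⊢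
  linarith

lemma setIntegral_pos_of_ae_pos {X : Type*} [TopologicalSpace X] [MeasurableSpace X]
    [OpensMeasurableSpace X] {μ : Measure X} [μ.IsOpenPosMeasure] {s : Set X} {f : X → ℝ}
    (hs : IsOpen s) (hne : s.Nonempty) (hf : IntegrableOn f s μ) (hpos : ∀ᵐ z ∂μ, z ∈ s → 0 < f z) :
    0 < ∫ z in s, f z ∂μ := by
  have hpos' : ∀ᵐ z ∂μ.restrict s, 0 < f z := (ae_restrict_iff' hs.measurableSet).2 hpos
  rw [setIntegral_pos_iff_support_of_nonneg_ae (hpos'.mono fun _ h => h.le) hf]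
  have hsupp : (Function.support f ∩ s : Set X) =ᵐ[μ] s := by
    refine (inter_subset_right.eventuallyLE).antisymm ?_
    filter_upwards [hpos] with z hz hzs
    exact ⟨(hz hzs).ne', hzs⟩
  rw [measure_congr hsupp]
  exact hs.measure_pos μ hne

lemma integral_halfSpace_pos {i : Fin n} {lam : ℝ} (hlam : 0 < lam)
    (hne : (sigmaSlab i lam).Nonempty) {φ : EuclideanSpace ℝ (Fin n) → ℝ}
    (hφ : IntegrableOn φ (halfSpace i)) (habove : ∀ᵐ z, lam ≤ z i → 0 ≤ φ z)
    (hslab : ∀ᵐ z, z ∈ sigmaSlab i lam → 0 < φ z + φ (reflect i lam z)) :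
    0 < ∫ z in halfSpace i, φ z := by
  have hsplit := halfSpace_eq_sigmaSlab_union (i := i) hlam
  have hφslab : IntegrableOn φ (sigmaSlab i lam) := hφ.mono_set (hsplit ▸ subset_union_left)
  have hφabove : IntegrableOn φ {z | lam ≤ z i} := hφ.mono_set (hsplit ▸ subset_union_right)
  have hmirror : reflect i lam ⁻¹' (reflect i lam ⁻¹' sigmaSlab i lam) = sigmaSlab i lam := by
    rw [← preimage_comp, (reflect_involutive i lam).comp_self, preimage_id]
  have hφR : IntegrableOn (fun z => φ (reflect i lam z)) (sigmaSlab i lam) := by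
    rw [← hmirror]
    exact ((measurePreserving_reflect i lam).integrableOn_comp_preimage
      (measurableEmbedding_reflect i lam)).2
      (hφabove.mono_set (preimage_reflect_sigmaSlab_subset i lam))
  have hcov : ∫ z in sigmaSlab i lam, φ (reflect i lam z) =
      ∫ z in reflect i lam ⁻¹' sigmaSlab i lam, φ z := by
    conv_lhs => rw [← hmirror]
    exact (measurePreserving_reflect i lam).setIntegral_preimage_emb
      (measurableEmbedding_reflect i lam) φ _
  have hfold : ∫ z in reflect i lam ⁻¹' sigmaSlab i lam, φ z ≤ ∫ z in {z | lam ≤ z i}, φ z :=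
    setIntegral_mono_set hφabove ((ae_restrict_iff' (measurableSet_le_coord i lam)).2 habove)
      (preimage_reflect_sigmaSlab_subset i lam).eventuallyLE
  have hpos : 0 < ∫ z in sigmaSlab i lam, (φ z + φ (reflect i lam z)) :=
    setIntegral_pos_of_ae_pos (isOpen_sigmaSlab i lam) hne (hφslab.add hφR) hslab
  rw [integral_add hφslab hφR, hcov] at hpos
  rw [hsplit, setIntegral_union (disjoint_sigmaSlab_le_coord i lam)
    (measurableSet_le_coord i lam) hφslab hφabove]
  linarith

lemma add_mul_pos_of_reflection_ineqs {a b c d s t : ℝ} (hP2 : |c - d| < a - b) (hP1 : d < a)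
    (hs : 0 < s) (hst : s < t) : 0 < (c - b) * s + (a - d) * t := by
  have hcd := (abs_lt.1 hP2).1
  have hsplit : (c - b) * s + (a - d) * t = (c - b + (a - d)) * s + (a - d) * (t - s) := by ring
  rw [hsplit]
  exact add_pos (mul_pos (by linarith) hs) (mul_pos (by linarith) (by linarith))

def composedKernel (i : Fin n) (G₁ G₂ : EuclideanSpace ℝ (Fin n) → EuclideanSpace ℝ (Fin n) → ℝ)
    (x y : EuclideanSpace ℝ (Fin n)) : ℝ :=
  ∫ z in halfSpace i, G₁ x z * G₂ z y

lemma composedKernel_swap (i : Fin n)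
    (G₁ G₂ : EuclideanSpace ℝ (Fin n) → EuclideanSpace ℝ (Fin n) → ℝ)
    (x y : EuclideanSpace ℝ (Fin n)) :
    composedKernel i G₁ G₂ y x = composedKernel i (Function.swap G₂) (Function.swap G₁) x y := by
  simp only [composedKernel, Function.swap, mul_comm]

section Swap

variable {i : Fin n} {K : EuclideanSpace ℝ (Fin n) → EuclideanSpace ℝ (Fin n) → ℝ}

lemma PropP1.swap (h : PropP1 i K) : PropP1 i (Function.swap K) :=
  fun lam hlam x hx y hy hxy => by
    simpa only [Function.swap, max_comm] using h lam hlam y hy x hx hxy.symm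

lemma PropP2.swap (h : PropP2 i K) : PropP2 i (Function.swap K) :=
  fun lam hlam x hx y hy hxy => by
    simpa only [Function.swap, abs_sub_comm] using h lam hlam y hy x hx hxy.symm

lemma PropP3.swap (h : PropP3 i K) : PropP3 i (Function.swap K) :=
  fun lam hlam x hx y hy0 hyl hyne => (h lam hlam x hx y hy0 hyl hyne).symm

lemma HasReflProps.swap (h : HasReflProps i K) : HasReflProps i (Function.swap K) :=
  ⟨h.1.swap, h.2.1.swap, h.2.2.swap⟩

end Swap

theorem composedKernel_lt_reflect_left {i : Fin n}
    {G₁ G₂ : EuclideanSpace ℝ (Fin n) → EuclideanSpace ℝ (Fin n) → ℝ}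
    (h₁ : HasReflProps i G₁) (h₂ : PropP3 i G₂)
    (h₂pos : ∀ x ∈ halfSpace i, ∀ y ∈ halfSpace i, 0 < G₂ x y)
    (hint : ∀ x ∈ halfSpace i, ∀ y ∈ halfSpace i, x ≠ y →
      IntegrableOn (fun z => G₁ x z * G₂ z y) (halfSpace i))
    {lam : ℝ} (hlam : 0 < lam) {x : EuclideanSpace ℝ (Fin n)} (hx : x ∈ sigmaSlab i lam)
    {y : EuclideanSpace ℝ (Fin n)} (hy0 : 0 < y i) (hyl : lam ≤ y i)
    (hyne : y ≠ reflect i lam x) :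
    composedKernel i G₁ G₂ x y < composedKernel i G₁ G₂ (reflect i lam x) y := by
  have : Nonempty (Fin n) := ⟨i⟩
  have hxy : x ≠ y := by
    rintro rfl
    exact (not_le.2 hx.2) hyl
  have hIx' := hint _ (reflect_mem_halfSpace hx) y hy0 hyne.symm
  have hIx := hint x hx.1 y hy0 hxy
  rw [← sub_pos, composedKernel, composedKernel, ← integral_sub hIx' hIx]
  refine integral_halfSpace_pos hlam ⟨x, hx⟩ (hIx'.sub hIx) ?_ ?_
  · filter_upwards [volume.ae_ne (reflect i lam x)] with z hzx hzl
    have hz0 : 0 < z i := hlam.trans_le hzl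
    have hP3 := (h₁.2.2 lam hlam x hx z hz0 hzl hzx).1
    exact sub_nonneg.2 (mul_le_mul_of_nonneg_right hP3.le (h₂pos z hz0 y hy0).le)
  · filter_upwards [volume.ae_ne x, volume.ae_ne (reflect i lam y)] with z hzx hzy hz
    have hyz : y ≠ reflect i lam z := fun h => hzy (by rw [h, reflect_involutive])
    have hP1 := h₁.1 lam hlam x hx z hz hzx.symm
    have key := add_mul_pos_of_reflection_ineqs (h₁.2.1 lam hlam x hx z hz hzx.symm)
      ((le_max_right _ _).trans_lt hP1) (h₂pos z hz.1 y hy0)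
      (h₂ lam hlam z hz y hy0 hyl hyz).1
    linarith

theorem composed_kernel_P3_general
    (n : ℕ) (i : Fin n)
    (G₁ G₂ : EuclideanSpace ℝ (Fin n) → EuclideanSpace ℝ (Fin n) → ℝ)
    (h₁pos : ∀ x ∈ halfSpace i, ∀ y ∈ halfSpace i, 0 < G₁ x y)
    (h₂pos : ∀ x ∈ halfSpace i, ∀ y ∈ halfSpace i, 0 < G₂ x y)
    (h₁ : HasReflProps i G₁) (h₂ : HasReflProps i G₂)
    (hint : ∀ x ∈ halfSpace i, ∀ y ∈ halfSpace i, x ≠ y →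
      IntegrableOn (fun z => G₁ x z * G₂ z y) (halfSpace i)) :
    PropP3 i (fun x y => ∫ z in halfSpace i, G₁ x z * G₂ z y) := by
  intro lam hlam x hx y hy0 hyl hyne
  refine ⟨composedKernel_lt_reflect_left h₁ h₂.2.2 h₂pos hint hlam hx hy0 hyl hyne, ?_⟩
  change composedKernel i G₁ G₂ y x < composedKernel i G₁ G₂ y (reflect i lam x)
  rw [composedKernel_swap i G₁ G₂ x y, composedKernel_swap i G₁ G₂ (reflect i lam x) y]
  refine composedKernel_lt_reflect_left h₂.swap h₁.2.2.swap (fun x hx y hy => h₁pos y hy x hx)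
    ?_ hlam hx hy0 hyl hyne
  intro x hx y hy hxy
  simpa only [Function.swap, mul_comm] using hint y hy x hx hxy.symm

/-- the composed kernel `G(x,y) = ∫_{R^n_+} G₁(x,z) G₂(z,y) dz`
inherits property (P3). -/
theorem composed_kernel_P3
    (n : ℕ) (i : Fin n) (hi : (i : ℕ) = n - 1) (hn : 2 ≤ n)
    (G₁ G₂ : EuclideanSpace ℝ (Fin n) → EuclideanSpace ℝ (Fin n) → ℝ)
    (h₁pos : ∀ x ∈ halfSpace i, ∀ y ∈ halfSpace i, 0 < G₁ x y)
    (h₂pos : ∀ x ∈ halfSpace i, ∀ y ∈ halfSpace i, 0 < G₂ x y)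
    (h₁ : HasReflProps i G₁) (h₂ : HasReflProps i G₂)
    (hint : ∀ x ∈ halfSpace i, ∀ y ∈ halfSpace i, x ≠ y →
      IntegrableOn (fun z => G₁ x z * G₂ z y) (halfSpace i)) :
    PropP3 i (fun x y => ∫ z in halfSpace i, G₁ x z * G₂ z y) :=
  composed_kernel_P3_general n i G₁ G₂ h₁pos h₂pos h₁ h₂ hint
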